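/- arXiv:1503.03968 — 2 statements merged into one kernel-verified Lean document; each statement's English description precedes it below -/
import Mathlib

section
/- Let N = (n_ij) ∈ SL(2,ℤ) have real eigenvalues α > 1 and 1/α, let p, q, r be integers with r ≠ 0, and set G = G⁺_{N,p,q,r}. Then the center of Γ_G is the infinite cyclic subgroup generated by g₃, and the quotient of Γ_G by its center is a free abelian group of rank two, generated by the classes of g₁ and g₂. -/
/-!
Let `H` be the subgroup generated by `g₁, g₂, g₃`. It is a Heisenberg group: `g₃` is central,
`g₂ g₁ = g₁ g₂ g₃⁻ʳ`, and every element of `H` is `g₁ᵐ g₂ⁿ g₃ᵏ`. The normal form is unique because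
`G` maps to the holomorph of the rational Heisenberg group, with `g₀` acting by an automorphism
that lifts `N`; the same representation shows that conjugation by `g₀` acts on `(m, n)` through
`N`, so `H` is normal with `G / H` generated by `g₀`.

Hence `Γ_G = H`: the exponent sum of `g₀` is a homomorphism to `ℤ` killing `Γ_G` and with
kernel `H`, while in the abelianization `g₃` is torsion by the commutator relation, and then so
are `g₁, g₂` since `det (N - 1) = 2 - tr N ≠ 0`. An element `g₁ᵐ g₂ⁿ g₃ᵏ` commutes with `g₁` and
`g₂` only if `r n = r m = 0`, which gives the centre and the quotient.
-/

/-- The relations of the group `G⁺_{N,p,q,r}` attached to an Inoue surface of type `S⁺`: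
generators `g₀,g₁,g₂,g₃` (indexed by `Fin 4`) and relations
`g₀g₁g₀⁻¹ = g₁^{n₁₁} g₂^{n₁₂} g₃^{p}`, `g₀g₂g₀⁻¹ = g₁^{n₂₁} g₂^{n₂₂} g₃^{q}`,
`g₁g₂g₁⁻¹g₂⁻¹ = g₃^{r}` and `g₃gᵢ = gᵢg₃` for `i = 0,1,2`. -/
def gplusRels (N : Matrix (Fin 2) (Fin 2) ℤ) (p q r : ℤ) : Set (FreeGroup (Fin 4)) :=
  { FreeGroup.of 0 * FreeGroup.of 1 * (FreeGroup.of 0)⁻¹ *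
      ((FreeGroup.of 1) ^ N 0 0 * (FreeGroup.of 2) ^ N 0 1 * (FreeGroup.of 3) ^ p)⁻¹,
    FreeGroup.of 0 * FreeGroup.of 2 * (FreeGroup.of 0)⁻¹ *
      ((FreeGroup.of 1) ^ N 1 0 * (FreeGroup.of 2) ^ N 1 1 * (FreeGroup.of 3) ^ q)⁻¹,
    FreeGroup.of 1 * FreeGroup.of 2 * (FreeGroup.of 1)⁻¹ * (FreeGroup.of 2)⁻¹ *
      ((FreeGroup.of 3) ^ r)⁻¹,
    FreeGroup.of 3 * FreeGroup.of 0 * (FreeGroup.of 3)⁻¹ * (FreeGroup.of 0)⁻¹,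
    FreeGroup.of 3 * FreeGroup.of 1 * (FreeGroup.of 3)⁻¹ * (FreeGroup.of 1)⁻¹,
    FreeGroup.of 3 * FreeGroup.of 2 * (FreeGroup.of 3)⁻¹ * (FreeGroup.of 2)⁻¹ }

/-- The group `G⁺_{N,p,q,r}`. -/
abbrev Gplus (N : Matrix (Fin 2) (Fin 2) ℤ) (p q r : ℤ) := PresentedGroup (gplusRels N p q r)

/-- For a group `G`, `GammaSub G` is the normal subgroup
`Γ_G = {g ∈ G : g mod [G,G] is of finite order}`. -/
def GammaSub (G : Type*) [Group G] : Subgroup G :=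
  Subgroup.comap (Abelianization.of : G →* Abelianization G)
    (CommGroup.torsion (Abelianization G))

instance GammaSub.normal (G : Type*) [Group G] : (GammaSub G).Normal :=
  Subgroup.Normal.comap inferInstance _

@[ext] structure Heis (R : Type*) where
  x : R
  y : R
  z : R

namespace Heis

variable {R : Type*} [CommRing R]

instance : Mul (Heis R) := ⟨fun u v => ⟨u.x + v.x, u.y + v.y, u.z + v.z + (u.x * v.y - u.y * v.x)⟩⟩
instance : One (Heis R) := ⟨⟨0, 0, 0⟩⟩
instance : Inv (Heis R) := ⟨fun u => ⟨-u.x, -u.y, -u.z⟩⟩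

@[simp] lemma mul_x (u v : Heis R) : (u * v).x = u.x + v.x := rfl
@[simp] lemma mul_y (u v : Heis R) : (u * v).y = u.y + v.y := rfl
@[simp] lemma mul_z (u v : Heis R) : (u * v).z = u.z + v.z + (u.x * v.y - u.y * v.x) := rfl
@[simp] lemma one_x : (1 : Heis R).x = 0 := rfl
@[simp] lemma one_y : (1 : Heis R).y = 0 := rfl
@[simp] lemma one_z : (1 : Heis R).z = 0 := rfl
@[simp] lemma inv_x (u : Heis R) : u⁻¹.x = -u.x := rfl
@[simp] lemma inv_y (u : Heis R) : u⁻¹.y = -u.y := rfl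
@[simp] lemma inv_z (u : Heis R) : u⁻¹.z = -u.z := rfl

instance : Group (Heis R) where
  mul_assoc _ _ _ := by ext <;> simp <;> ring
  one_mul _ := by ext <;> simp
  mul_one _ := by ext <;> simp
  inv_mul_cancel _ := by ext <;> simp; ring

lemma zpow_eq (u : Heis R) (m : ℤ) : u ^ m = ⟨m * u.x, m * u.y, m * u.z⟩ := by
  induction m using Int.induction_on with
  | zero => ext <;> simp
  | succ n ih => rw [zpow_add_one, ih]; ext <;> simp <;> ring
  | pred n ih => rw [zpow_sub_one, ih]; ext <;> simp <;> ring

/-- A homomorphism because `det M = 1` means that `M` preserves the form `x y' - y x'`. -/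
def sl2Aut (M : Matrix (Fin 2) (Fin 2) R) (hM : M.det = 1) (D E : R) : Heis R ≃* Heis R where
  toFun u := ⟨u.x * M 0 0 + u.y * M 1 0, u.x * M 0 1 + u.y * M 1 1, u.z + D * u.x + E * u.y⟩
  invFun u :=
    let x := u.x * M 1 1 - u.y * M 1 0
    let y := u.y * M 0 0 - u.x * M 0 1
    ⟨x, y, u.z - D * x - E * y⟩
  left_inv u := by
    rw [Matrix.det_fin_two] at hM
    ext
    · linear_combination u.x * hM
    · linear_combination u.y * hM
    · linear_combination (-(D * u.x + E * u.y)) * hM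
  right_inv u := by
    rw [Matrix.det_fin_two] at hM
    ext
    · linear_combination u.x * hM
    · linear_combination u.y * hM
    · ring
  map_mul' u v := by
    rw [Matrix.det_fin_two] at hM
    ext
    · simp only [mul_x, mul_y]; ring
    · simp only [mul_x, mul_y]; ring
    · simp only [mul_x, mul_y, mul_z]
      linear_combination (-(u.x * v.y - u.y * v.x)) * hM

end Heis

section NormalForm

variable {G : Type*} [Group G] {a b z : G} {s : ℤ}

theorem zpow_mul_zpow_of_mul_eq (haz : Commute a z) (hbz : Commute b z)
    (h : b * a = a * b * z ^ s) (m n : ℤ) :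
    b ^ n * a ^ m = a ^ m * b ^ n * z ^ (s * m * n) := by
  set c := z ^ s
  have hac : Commute a c := haz.zpow_right s
  have hbc : Commute b c := hbz.zpow_right s
  have hconj_a : b * a ^ m * b⁻¹ = a ^ m * c ^ m := by
    have : b * a * b⁻¹ = a * c := by
      rw [h, mul_assoc a, hbc.eq, ← mul_assoc, mul_inv_cancel_right]
    simpa only [MulAut.conj_apply, this, hac.mul_zpow] using map_zpow (MulAut.conj b) a m
  have hconj_b : (a ^ m)⁻¹ * b * a ^ m = b * c ^ m :=
    calc (a ^ m)⁻¹ * b * a ^ m = (a ^ m)⁻¹ * (b * a ^ m * b⁻¹) * b := by group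
      _ = c ^ m * b := by rw [hconj_a]; group
      _ = b * c ^ m := (hbc.zpow_right m).eq.symm
  have hconj_bn : (a ^ m)⁻¹ * b ^ n * a ^ m = b ^ n * z ^ (s * m * n) := by
    have := map_zpow (MulAut.conj (a ^ m)⁻¹) b n
    simp only [MulAut.conj_apply, inv_inv] at this
    rw [this, hconj_b, (hbc.zpow_right m).mul_zpow, ← zpow_mul, ← zpow_mul, mul_assoc]
  calc b ^ n * a ^ m = a ^ m * ((a ^ m)⁻¹ * b ^ n * a ^ m) := by group
    _ = a ^ m * b ^ n * z ^ (s * m * n) := by rw [hconj_bn, ← mul_assoc]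

theorem zpow_mul_zpow_mul_zpow_mul (haz : Commute a z) (hbz : Commute b z)
    (h : b * a = a * b * z ^ s) (m n k m' n' k' : ℤ) :
    a ^ m * b ^ n * z ^ k * (a ^ m' * b ^ n' * z ^ k') =
      a ^ (m + m') * b ^ (n + n') * z ^ (k + k' + s * m' * n) := by
  have hzk : z ^ k * (a ^ m' * b ^ n') = a ^ m' * b ^ n' * z ^ k :=
    ((haz.zpow_zpow m' k).mul_left (hbz.zpow_zpow n' k)).symm.eq
  have hzb : z ^ (s * m' * n) * b ^ n' = b ^ n' * z ^ (s * m' * n) :=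
    (hbz.zpow_zpow n' _).symm.eq
  calc a ^ m * b ^ n * z ^ k * (a ^ m' * b ^ n' * z ^ k')
      = a ^ m * b ^ n * (z ^ k * (a ^ m' * b ^ n')) * z ^ k' := by group
    _ = a ^ m * (b ^ n * a ^ m') * b ^ n' * (z ^ k * z ^ k') := by rw [hzk]; group
    _ = a ^ (m + m') * b ^ n * (z ^ (s * m' * n) * b ^ n') * (z ^ k * z ^ k') := by
      rw [zpow_mul_zpow_of_mul_eq haz hbz h]; group
    _ = a ^ (m + m') * b ^ (n + n') * z ^ (k + k' + s * m' * n) := by rw [hzb]; group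

theorem exists_eq_zpow_mul_zpow_mul_zpow_of_mem_closure (haz : Commute a z) (hbz : Commute b z)
    (h : b * a = a * b * z ^ s) {x : G} (hx : x ∈ Subgroup.closure {a, b, z}) :
    ∃ m n k : ℤ, x = a ^ m * b ^ n * z ^ k := by
  induction hx using Subgroup.closure_induction with
  | mem y hy =>
    rcases hy with rfl | rfl | rfl
    · exact ⟨1, 0, 0, by simp⟩
    · exact ⟨0, 1, 0, by simp⟩
    · exact ⟨0, 0, 1, by simp⟩
  | one => exact ⟨0, 0, 0, by simp⟩
  | mul x y _ _ hx hy =>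
    obtain ⟨m, n, k, rfl⟩ := hx
    obtain ⟨m', n', k', rfl⟩ := hy
    exact ⟨_, _, _, zpow_mul_zpow_mul_zpow_mul haz hbz h m n k m' n' k'⟩
  | inv x _ hx =>
    obtain ⟨m, n, k, rfl⟩ := hx
    refine ⟨-m, -n, -k + s * m * n, inv_eq_of_mul_eq_one_right ?_⟩
    rw [zpow_mul_zpow_mul_zpow_mul haz hbz h]
    simp

end NormalForm

theorem Matrix.det_sub_one_fin_two {R : Type*} [CommRing R] (M : Matrix (Fin 2) (Fin 2) R) :
    (M - 1).det = M.det - M.trace + 1 := by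
  simp [Matrix.det_fin_two, Matrix.trace_fin_two]
  ring

theorem two_lt_add_one_div {α : ℝ} (h : 1 < α) : 2 < α + 1 / α := by
  have hα : 0 < α := by linarith
  rw [← sub_pos, show α + 1 / α - 2 = (α - 1) ^ 2 / α by field_simp; ring]
  exact div_pos (pow_pos (sub_pos.mpr h) 2) hα

theorem isOfFinAddOrder_of_eq_smul_add_smul {A : Type*} [AddCommGroup A]
    {M : Matrix (Fin 2) (Fin 2) ℤ} (hM : (M - 1).det ≠ 0) {u v w : A} {p q : ℤ}
    (hu : u = M 0 0 • u + M 0 1 • v + p • w) (hv : v = M 1 0 • u + M 1 1 • v + q • w)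
    (hw : IsOfFinAddOrder w) : IsOfFinAddOrder u ∧ IsOfFinAddOrder v := by
  obtain ⟨r, hr, hrw⟩ := isOfFinAddOrder_iff_zsmul_eq_zero.mp hw
  have hδ : (M - 1).det = (M 0 0 - 1) * (M 1 1 - 1) - M 0 1 * M 1 0 := by
    simp [Matrix.det_fin_two]
  -- the coefficients of `hu` and `hv` are the entries of the adjugate of `M - 1`
  refine ⟨isOfFinAddOrder_iff_zsmul_eq_zero.mpr ⟨r * (M - 1).det, mul_ne_zero hr hM, ?_⟩,
    isOfFinAddOrder_iff_zsmul_eq_zero.mpr ⟨r * (M - 1).det, mul_ne_zero hr hM, ?_⟩⟩ <;> rw [hδ]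
  · linear_combination (norm := module) (r * (1 - M 1 1)) • hu + (r * M 0 1) • hv +
      (p * (1 - M 1 1) + M 0 1 * q) • hrw
  · linear_combination (norm := module) (r * M 1 0) • hu + (r * (1 - M 0 0)) • hv +
      (M 1 0 * p + (1 - M 0 0) * q) • hrw

namespace Gplus

open SemidirectProduct
open scoped commutatorElement

variable {N : Matrix (Fin 2) (Fin 2) ℤ} {p q r : ℤ}

local notation "g₀" => (PresentedGroup.of 0 : Gplus N p q r)
local notation "g₁" => (PresentedGroup.of 1 : Gplus N p q r)
local notation "g₂" => (PresentedGroup.of 2 : Gplus N p q r)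
local notation "g₃" => (PresentedGroup.of 3 : Gplus N p q r)

theorem conj_g₁ : g₀ * g₁ * g₀⁻¹ = g₁ ^ N 0 0 * g₂ ^ N 0 1 * g₃ ^ p := by
  have h := PresentedGroup.one_of_mem (rels := gplusRels N p q r) (Or.inl rfl)
  simp only [map_mul, map_inv, map_zpow] at h
  exact mul_inv_eq_one.mp h

theorem conj_g₂ : g₀ * g₂ * g₀⁻¹ = g₁ ^ N 1 0 * g₂ ^ N 1 1 * g₃ ^ q := by
  have h := PresentedGroup.one_of_mem (rels := gplusRels N p q r) (Or.inr <| Or.inl rfl)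
  simp only [map_mul, map_inv, map_zpow] at h
  exact mul_inv_eq_one.mp h

theorem commutatorElement_g₁_g₂ : ⁅g₁, g₂⁆ = g₃ ^ r := by
  have h := PresentedGroup.one_of_mem (rels := gplusRels N p q r) (Or.inr <| Or.inr <| Or.inl rfl)
  simp only [map_mul, map_inv, map_zpow] at h
  exact mul_inv_eq_one.mp h

theorem commute_g₃_of (i : Fin 4) : Commute g₃ (PresentedGroup.of i) := by
  rw [← commutatorElement_eq_one_iff_commute]
  fin_cases i
  · exact PresentedGroup.one_of_mem (Or.inr <| Or.inr <| Or.inr <| Or.inl rfl)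
  · exact PresentedGroup.one_of_mem (Or.inr <| Or.inr <| Or.inr <| Or.inr <| Or.inl rfl)
  · exact PresentedGroup.one_of_mem (Or.inr <| Or.inr <| Or.inr <| Or.inr <| Or.inr rfl)
  · exact commutatorElement_self _

theorem commute_g₃ (x : Gplus N p q r) : Commute g₃ x := by
  have : Subgroup.centralizer {g₃} = ⊤ := by
    rw [eq_top_iff, ← PresentedGroup.closure_range_of, Subgroup.closure_le]
    rintro _ ⟨i, rfl⟩
    exact Subgroup.mem_centralizer_singleton_iff.mpr (commute_g₃_of i).eq.symm
  exact (Subgroup.mem_centralizer_singleton_iff.mp (this ▸ Subgroup.mem_top x)).symm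

theorem g₂_mul_g₁ : g₂ * g₁ = g₁ * g₂ * g₃ ^ (-r) :=
  calc g₂ * g₁ = g₃ ^ (-r) * (g₁ * g₂) := by
        rw [zpow_neg, ← commutatorElement_g₁_g₂, commutatorElement_def]; group
    _ = g₁ * g₂ * g₃ ^ (-r) := ((commute_g₃ _).zpow_left _).eq

theorem nf_mul (m n k m' n' k' : ℤ) :
    g₁ ^ m * g₂ ^ n * g₃ ^ k * (g₁ ^ m' * g₂ ^ n' * g₃ ^ k') =
      g₁ ^ (m + m') * g₂ ^ (n + n') * g₃ ^ (k + k' + -r * m' * n) :=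
  zpow_mul_zpow_mul_zpow_mul (commute_g₃ _).symm (commute_g₃ _).symm g₂_mul_g₁ m n k m' n' k'

variable (N p q r) in
def heisenbergSubgroup : Subgroup (Gplus N p q r) := Subgroup.closure {g₁, g₂, g₃}

local notation "𝓗" => heisenbergSubgroup N p q r

theorem g₁_mem : g₁ ∈ 𝓗 := Subgroup.subset_closure (by simp)
theorem g₂_mem : g₂ ∈ 𝓗 := Subgroup.subset_closure (by simp)
theorem g₃_mem : g₃ ∈ 𝓗 := Subgroup.subset_closure (by simp)

theorem exists_eq_nf {x : Gplus N p q r} (hx : x ∈ 𝓗) :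
    ∃ m n k : ℤ, x = g₁ ^ m * g₂ ^ n * g₃ ^ k :=
  exists_eq_zpow_mul_zpow_mul_zpow_of_mem_closure (commute_g₃ _).symm (commute_g₃ _).symm
    g₂_mul_g₁ hx

/- In `Heis ℚ` the commutator of `(1, 0, 0)` and `(0, 1, 0)` is `(0, 0, 2)`, so `g₃` must go to
`(0, 0, 2 / r)`; the translation part of `monodromy` is then forced by the relations for
`g₀ g₁ g₀⁻¹` and `g₀ g₂ g₀⁻¹`. -/
variable (p q r) in
def monodromy (hN : N.det = 1) : MulAut (Heis ℚ) :=
  Heis.sl2Aut (N.map (↑)) (by rw [← Int.cast_det, hN, Int.cast_one])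
    (N 0 0 * N 0 1 + 2 * p / r) (N 1 0 * N 1 1 + 2 * q / r)

def toHolomorph (hN : N.det = 1) (hr : r ≠ 0) :
    Gplus N p q r →* Heis ℚ ⋊[MonoidHom.id _] MulAut (Heis ℚ) :=
  PresentedGroup.toGroup (f := ![inr (monodromy p q r hN), inl ⟨1, 0, 0⟩, inl ⟨0, 1, 0⟩,
    inl ⟨0, 0, 2 / r⟩]) <| by
  have hr' : (r : ℚ) ≠ 0 := by exact_mod_cast hr
  rintro w (rfl | rfl | rfl | rfl | rfl | rfl) <;>
    simp only [map_mul, map_inv, map_zpow, FreeGroup.lift_apply_of, Matrix.cons_val] <;>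
    ext <;> simp [monodromy, Heis.sl2Aut, Heis.zpow_eq, ← map_zpow inl, -map_zpow]
  all_goals field_simp; ring

theorem toHolomorph_g₀ (hN : N.det = 1) (hr : r ≠ 0) :
    toHolomorph hN hr g₀ = inr (monodromy p q r hN) :=
  PresentedGroup.toGroup.of _

theorem toHolomorph_nf (hN : N.det = 1) (hr : r ≠ 0) (m n k : ℤ) :
    toHolomorph hN hr (g₁ ^ m * g₂ ^ n * g₃ ^ k) = inl ⟨m, n, m * n + 2 * k / r⟩ := by
  simp only [map_mul, map_zpow, toHolomorph, PresentedGroup.toGroup.of, Matrix.cons_val]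
  simp only [← map_zpow inl, ← map_mul inl]
  congr 1
  ext <;> simp [Heis.zpow_eq]
  ring

theorem nf_injective (hN : N.det = 1) (hr : r ≠ 0) {m n k m' n' k' : ℤ}
    (h : g₁ ^ m * g₂ ^ n * g₃ ^ k = g₁ ^ m' * g₂ ^ n' * g₃ ^ k') :
    m = m' ∧ n = n' ∧ k = k' := by
  have hr' : (r : ℚ) ≠ 0 := by exact_mod_cast hr
  have h' := inl_injective <| by simpa only [toHolomorph_nf] using congrArg (toHolomorph hN hr) h
  simp only [Heis.mk.injEq] at h'
  obtain ⟨hm, hn, hk⟩ := h'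
  have hm : m = m' := by exact_mod_cast hm
  have hn : n = n' := by exact_mod_cast hn
  subst hm hn
  refine ⟨rfl, rfl, ?_⟩
  field_simp at hk
  exact_mod_cast (by linarith : (k : ℚ) = k')

theorem conj_g₀_mem {x : Gplus N p q r} (hx : x ∈ 𝓗) : g₀ * x * g₀⁻¹ ∈ 𝓗 := by
  have : 𝓗 ≤ Subgroup.comap (MulAut.conj g₀).toMonoidHom 𝓗 := by
    refine (Subgroup.closure_le _).mpr ?_
    rintro _ (rfl | rfl | rfl) <;>
      simp only [SetLike.mem_coe, Subgroup.mem_comap, MulEquiv.coe_toMonoidHom, MulAut.conj_apply]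
    · rw [conj_g₁]
      exact mul_mem (mul_mem (zpow_mem g₁_mem _) (zpow_mem g₂_mem _)) (zpow_mem g₃_mem _)
    · rw [conj_g₂]
      exact mul_mem (mul_mem (zpow_mem g₁_mem _) (zpow_mem g₂_mem _)) (zpow_mem g₃_mem _)
    · rw [(commute_g₃_of 0).symm.eq, mul_inv_cancel_right]; exact g₃_mem
  exact this hx

theorem exists_conj_g₀_eq (hN : N.det = 1) (hr : r ≠ 0) (m n : ℤ) :
    ∃ k : ℤ, g₀ * (g₁ ^ m * g₂ ^ n) * g₀⁻¹ =
      g₁ ^ (m * N 0 0 + n * N 1 0) * g₂ ^ (m * N 0 1 + n * N 1 1) * g₃ ^ k := by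
  obtain ⟨a, b, k, hk⟩ := exists_eq_nf (conj_g₀_mem (x := g₁ ^ m * g₂ ^ n)
    (mul_mem (zpow_mem g₁_mem _) (zpow_mem g₂_mem _)))
  refine ⟨k, ?_⟩
  have h := congrArg (toHolomorph hN hr) hk
  rw [map_mul, map_mul, map_inv, ← mul_one (g₁ ^ m * g₂ ^ n), ← zpow_zero g₃, toHolomorph_nf,
    toHolomorph_nf, toHolomorph_g₀, ← map_inv, ← inl_aut] at h
  have h' := congrArg (fun v ↦ (v.x, v.y)) (inl_injective h)
  simp only [monodromy, Heis.sl2Aut, MonoidHom.id_apply, MulEquiv.coe_mk, Equiv.coe_fn_mk,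
    Matrix.map_apply, Prod.mk.injEq] at h'
  obtain ⟨ha, hb⟩ := h'
  rw [hk, show a = m * N 0 0 + n * N 1 0 by exact_mod_cast ha.symm,
    show b = m * N 0 1 + n * N 1 1 by exact_mod_cast hb.symm]

theorem inv_conj_g₀_mem_of_conj_eq {x y : Gplus N p q r} (hx : x ∈ 𝓗) {k : ℤ}
    (h : g₀ * x * g₀⁻¹ = y * g₃ ^ k) : g₀⁻¹ * y * g₀ ∈ 𝓗 := by
  rw [← Subgroup.mul_mem_cancel_right _ (zpow_mem g₃_mem k)]
  convert hx using 1
  calc g₀⁻¹ * y * g₀ * g₃ ^ k = g₀⁻¹ * (y * g₃ ^ k) * g₀ := by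
        simp only [mul_assoc, ((commute_g₃ g₀).zpow_left k).eq]
    _ = x := by rw [← h]; group

theorem inv_conj_g₀_mem (hN : N.det = 1) (hr : r ≠ 0) {x : Gplus N p q r} (hx : x ∈ 𝓗) :
    g₀⁻¹ * x * g₀ ∈ 𝓗 := by
  have hdet : N 0 0 * N 1 1 - N 0 1 * N 1 0 = 1 := by rwa [Matrix.det_fin_two] at hN
  have hX (m n : ℤ) : g₁ ^ m * g₂ ^ n ∈ 𝓗 := mul_mem (zpow_mem g₁_mem _) (zpow_mem g₂_mem _)
  have : 𝓗 ≤ Subgroup.comap (MulAut.conj g₀⁻¹).toMonoidHom 𝓗 := by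
    refine (Subgroup.closure_le _).mpr ?_
    rintro _ (rfl | rfl | rfl) <;>
      simp only [SetLike.mem_coe, Subgroup.mem_comap, MulEquiv.coe_toMonoidHom, MulAut.conj_apply,
        inv_inv]
    · obtain ⟨k, hk⟩ := exists_conj_g₀_eq hN hr (N 1 1) (-N 0 1)
      rw [show N 1 1 * N 0 0 + -N 0 1 * N 1 0 = 1 by linear_combination hdet,
        show N 1 1 * N 0 1 + -N 0 1 * N 1 1 = 0 by ring, zpow_one, zpow_zero, mul_one] at hk
      exact inv_conj_g₀_mem_of_conj_eq (hX _ _) hk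
    · obtain ⟨k, hk⟩ := exists_conj_g₀_eq hN hr (-N 1 0) (N 0 0)
      rw [show -N 1 0 * N 0 0 + N 0 0 * N 1 0 = 0 by ring,
        show -N 1 0 * N 0 1 + N 0 0 * N 1 1 = 1 by linear_combination hdet, zpow_one, zpow_zero,
        one_mul] at hk
      exact inv_conj_g₀_mem_of_conj_eq (hX _ _) hk
    · rw [mul_assoc, (commute_g₃_of 0).eq, inv_mul_cancel_left]; exact g₃_mem
  exact this hx

theorem heisenbergSubgroup_normal (hN : N.det = 1) (hr : r ≠ 0) : Subgroup.Normal 𝓗 := by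
  rw [← Subgroup.normalizer_eq_top_iff, eq_top_iff, ← PresentedGroup.closure_range_of,
    Subgroup.closure_le]
  rintro _ ⟨i, rfl⟩
  fin_cases i
  · exact Subgroup.mem_normalizer_iff.mpr fun x ↦
      ⟨conj_g₀_mem, fun hx ↦ by simpa [mul_assoc] using inv_conj_g₀_mem hN hr hx⟩
  · exact Subgroup.le_normalizer g₁_mem
  · exact Subgroup.le_normalizer g₂_mem
  · exact Subgroup.le_normalizer g₃_mem

variable (N p q r) in
def g₀ExponentSum : Gplus N p q r →* Multiplicative ℤ :=
  PresentedGroup.toGroup (f := ![.ofAdd 1, 1, 1, 1]) <| by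
    rintro w (rfl | rfl | rfl | rfl | rfl | rfl) <;> simp

theorem mem_heisenbergSubgroup_of_g₀ExponentSum_eq_one (hN : N.det = 1) (hr : r ≠ 0)
    {x : Gplus N p q r} (hx : g₀ExponentSum N p q r x = 1) : x ∈ 𝓗 := by
  have : Subgroup.Normal 𝓗 := heisenbergSubgroup_normal hN hr
  have hquot : QuotientGroup.mk' 𝓗 =
      (zpowersHom _ (g₀ : Gplus N p q r ⧸ 𝓗)).comp (g₀ExponentSum N p q r) := by
    refine PresentedGroup.ext fun i ↦ ?_
    fin_cases i <;> simp [g₀ExponentSum, PresentedGroup.toGroup.of, g₁_mem, g₂_mem, g₃_mem]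
  rw [← QuotientGroup.eq_one_iff]
  simpa [hx] using DFunLike.congr_fun hquot x

theorem isOfFinOrder_abelianization_g₃ (hr : r ≠ 0) : IsOfFinOrder (Abelianization.of g₃) := by
  refine isOfFinOrder_iff_zpow_eq_one.mpr ⟨r, hr, ?_⟩
  rw [← map_zpow, ← commutatorElement_g₁_g₂, commutatorElement_def]
  simp

theorem heisenbergSubgroup_le_gammaSub (hN1 : (N - 1).det ≠ 0) (hr : r ≠ 0) :
    𝓗 ≤ GammaSub (Gplus N p q r) := by
  have hrel {x y : Gplus N p q r} (h : g₀ * x * g₀⁻¹ = y) :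
      Additive.ofMul (Abelianization.of x) = Additive.ofMul (Abelianization.of y) := by
    simp [← h]
  obtain ⟨h₁, h₂⟩ := isOfFinAddOrder_of_eq_smul_add_smul hN1
    (by simpa using hrel conj_g₁) (by simpa using hrel conj_g₂)
    (isOfFinAddOrder_ofMul_iff.mpr (isOfFinOrder_abelianization_g₃ hr))
  refine (Subgroup.closure_le _).mpr ?_
  rintro _ (rfl | rfl | rfl)
  · exact isOfFinAddOrder_ofMul_iff.mp h₁
  · exact isOfFinAddOrder_ofMul_iff.mp h₂
  · exact isOfFinOrder_abelianization_g₃ hr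

theorem gammaSub_le_heisenbergSubgroup (hN : N.det = 1) (hr : r ≠ 0) :
    GammaSub (Gplus N p q r) ≤ 𝓗 := fun x hx ↦
  mem_heisenbergSubgroup_of_g₀ExponentSum_eq_one hN hr <| by
    simpa using ((Abelianization.lift (g₀ExponentSum N p q r)).isOfFinOrder hx).eq_one'

theorem gammaSub_eq (hN : N.det = 1) (hN1 : (N - 1).det ≠ 0) (hr : r ≠ 0) :
    GammaSub (Gplus N p q r) = 𝓗 :=
  le_antisymm (gammaSub_le_heisenbergSubgroup hN hr) (heisenbergSubgroup_le_gammaSub hN1 hr)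

theorem exists_eq_g₃_zpow_of_commute (hN : N.det = 1) (hr : r ≠ 0) {x : Gplus N p q r}
    (hx : x ∈ 𝓗) (h₁ : x * g₁ = g₁ * x) (h₂ : x * g₂ = g₂ * x) : ∃ k : ℤ, x = g₃ ^ k := by
  obtain ⟨m, n, k, rfl⟩ := exists_eq_nf hx
  have e₁ : g₁ ^ m * g₂ ^ n * g₃ ^ k * (g₁ ^ (1 : ℤ) * g₂ ^ (0 : ℤ) * g₃ ^ (0 : ℤ)) =
      g₁ ^ (1 : ℤ) * g₂ ^ (0 : ℤ) * g₃ ^ (0 : ℤ) * (g₁ ^ m * g₂ ^ n * g₃ ^ k) := by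
    simpa using h₁
  have e₂ : g₁ ^ m * g₂ ^ n * g₃ ^ k * (g₁ ^ (0 : ℤ) * g₂ ^ (1 : ℤ) * g₃ ^ (0 : ℤ)) =
      g₁ ^ (0 : ℤ) * g₂ ^ (1 : ℤ) * g₃ ^ (0 : ℤ) * (g₁ ^ m * g₂ ^ n * g₃ ^ k) := by
    simpa using h₂
  rw [nf_mul, nf_mul] at e₁ e₂
  have hn : r * n = 0 := by linarith [(nf_injective hN hr e₁).2.2]
  have hm : r * m = 0 := by linarith [(nf_injective hN hr e₂).2.2]
  simp only [mul_eq_zero, hr, false_or] at hn hm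
  exact ⟨k, by simp [hm, hn]⟩

theorem mem_center_gammaSub_iff (hN : N.det = 1) (hN1 : (N - 1).det ≠ 0) (hr : r ≠ 0)
    (x : Gplus N p q r) :
    (x ∈ GammaSub (Gplus N p q r) ∧ ∀ y ∈ GammaSub (Gplus N p q r), x * y = y * x) ↔
      ∃ k : ℤ, x = g₃ ^ k := by
  rw [gammaSub_eq hN hN1 hr]
  constructor
  · rintro ⟨hx, hcomm⟩
    exact exists_eq_g₃_zpow_of_commute hN hr hx (hcomm _ g₁_mem) (hcomm _ g₂_mem)
  · rintro ⟨k, rfl⟩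
    exact ⟨zpow_mem g₃_mem k, fun y _ ↦ ((commute_g₃ y).zpow_left k).eq⟩

theorem not_isOfFinOrder_g₃ (hN : N.det = 1) (hr : r ≠ 0) : ¬IsOfFinOrder g₃ := by
  intro h
  obtain ⟨k, hk, hpow⟩ := isOfFinOrder_iff_zpow_eq_one.mp h
  have e : g₁ ^ (0 : ℤ) * g₂ ^ (0 : ℤ) * g₃ ^ k = g₁ ^ (0 : ℤ) * g₂ ^ (0 : ℤ) * g₃ ^ (0 : ℤ) := by
    simpa using hpow
  exact hk (nf_injective hN hr e).2.2

end Gplus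

/-- For `G = G⁺_{N,p,q,r}`, the center of `Γ_G` is the infinite cyclic subgroup generated
by `g₃`, and the quotient of `Γ_G` by its center is free abelian of rank two, generated by
the classes of `g₁` and `g₂`. -/
theorem stmt_3 (N : Matrix (Fin 2) (Fin 2) ℤ) (hN : N.det = 1)
    (hα : ∃ α : ℝ, 1 < α ∧ ((N 0 0 : ℝ) + (N 1 1 : ℝ)) = α + 1 / α)
    (p q r : ℤ) (hr : r ≠ 0) :
    -- the center of `Γ_G` is the infinite cyclic subgroup generated by `g₃`:
    (∀ x : Gplus N p q r,
      (x ∈ GammaSub (Gplus N p q r) ∧ ∀ y ∈ GammaSub (Gplus N p q r), x * y = y * x) ↔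
        ∃ n : ℤ, x = (PresentedGroup.of 3 : Gplus N p q r) ^ n) ∧
    ¬ IsOfFinOrder (PresentedGroup.of 3 : Gplus N p q r) ∧
    -- the quotient of `Γ_G` by its center is free abelian of rank two, generated by
    -- the classes of `g₁` and `g₂`:
    (∀ x ∈ GammaSub (Gplus N p q r), ∃ m n : ℤ, ∃ z : Gplus N p q r,
      (z ∈ GammaSub (Gplus N p q r) ∧ ∀ y ∈ GammaSub (Gplus N p q r), z * y = y * z) ∧
      x = (PresentedGroup.of 1 : Gplus N p q r) ^ m * PresentedGroup.of 2 ^ n * z) ∧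
    (∀ m n : ℤ,
      ((PresentedGroup.of 1 : Gplus N p q r) ^ m * PresentedGroup.of 2 ^ n
          ∈ GammaSub (Gplus N p q r) ∧
        ∀ y ∈ GammaSub (Gplus N p q r),
          ((PresentedGroup.of 1 : Gplus N p q r) ^ m * PresentedGroup.of 2 ^ n) * y =
            y * ((PresentedGroup.of 1 : Gplus N p q r) ^ m * PresentedGroup.of 2 ^ n)) →
      m = 0 ∧ n = 0) := by
  have hN1 : (N - 1).det ≠ 0 := by
    obtain ⟨α, hα1, htr⟩ := hα
    have : (2 : ℝ) < N 0 0 + N 1 1 := htr ▸ two_lt_add_one_div hα1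
    rw [Matrix.det_sub_one_fin_two, hN, Matrix.trace_fin_two]
    have : 2 < N 0 0 + N 1 1 := by exact_mod_cast this
    omega
  have hcenter := Gplus.mem_center_gammaSub_iff (p := p) (q := q) hN hN1 hr
  refine ⟨hcenter, Gplus.not_isOfFinOrder_g₃ hN hr, fun x hx ↦ ?_, fun m n hmn ↦ ?_⟩
  · obtain ⟨m, n, k, rfl⟩ := Gplus.exists_eq_nf (Gplus.gammaSub_eq hN hN1 hr ▸ hx)
    exact ⟨m, n, _, (hcenter _).mpr ⟨k, rfl⟩, rfl⟩
  · obtain ⟨k, hk⟩ := (hcenter _).mp hmn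
    have := Gplus.nf_injective hN hr (k := 0) (m' := 0) (n' := 0) (k' := k) (by simpa using hk)
    exact ⟨this.1, this.2.1⟩
end

section
/- Let N = (n_ij) ∈ SL(2,ℤ), let p, q, r be integers with r ≠ 0, and set G = G⁺_{N,p,q,r}. Let μ be the injective homomorphism from the subgroup ⟨g₁,g₂,g₃⟩ of G to Γ_r with μ(g₁^{l₁} g₂^{l₂} g₃^{l₃}) = ((l₁,l₂), l₃ + l₁ l₂ r/2). Then conjugation by g₀ maps ⟨g₁,g₂,g₃⟩ into itself, and for every γ ∈ ⟨g₁,g₂,g₃⟩, writing μ(γ) = (ζ, y), one has μ(g₀ γ g₀⁻¹) = (ζ N, ζ 𝐩 + y), where 𝐩 is the column vector (p + (r/2) n₁₁ n₁₂, q + (r/2) n₂₁ n₂₂). -/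
/-- `ℤ[r/2]`: the additive subgroup of `ℚ` generated by `1` and `r/2`;
it equals `ℤ` if `r` is even and `(1/2)ℤ` if `r` is odd. -/
def Zr (r : ℤ) : AddSubgroup ℚ := AddSubgroup.closure {1, (r : ℚ) / 2}

lemma intCast_mem_Zr (r n : ℤ) : (n : ℚ) ∈ Zr r := by
  have h1 : (1 : ℚ) ∈ Zr r := AddSubgroup.subset_closure (by simp)
  simpa using AddSubgroup.zsmul_mem _ h1 n

lemma half_mul_intCast_mem_Zr (r n : ℤ) : (r : ℚ) / 2 * (n : ℚ) ∈ Zr r := by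
  have h1 : (r : ℚ) / 2 ∈ Zr r := AddSubgroup.subset_closure (by simp)
  have := AddSubgroup.zsmul_mem _ h1 n
  simpa [zsmul_eq_mul, mul_comm] using this

/-- The group `Γ_r`, with underlying set `ℤ² × ℤ[r/2]` and multiplication
`(ζ, y)(ζ', y') = (ζ + ζ', y + y' + (r/2) det(ζ, ζ'))`. -/
@[ext]
structure GammaR (r : ℤ) where
  zeta : Fin 2 → ℤ
  y : ℚ
  hy : y ∈ Zr r

namespace GammaR

variable {r : ℤ}

instance : Mul (GammaR r) :=
  ⟨fun a b =>
    ⟨a.zeta + b.zeta,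
     a.y + b.y + (r : ℚ) / 2 * ((a.zeta 0 * b.zeta 1 - a.zeta 1 * b.zeta 0 : ℤ) : ℚ),
     add_mem (add_mem a.hy b.hy) (half_mul_intCast_mem_Zr r _)⟩⟩

instance : One (GammaR r) := ⟨⟨0, 0, zero_mem _⟩⟩

instance : Inv (GammaR r) := ⟨fun a => ⟨-a.zeta, -a.y, neg_mem a.hy⟩⟩

@[simp] lemma mul_zeta (a b : GammaR r) : (a * b).zeta = a.zeta + b.zeta := rfl
@[simp] lemma mul_y (a b : GammaR r) :
    (a * b).y = a.y + b.y + (r : ℚ) / 2 *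
      ((a.zeta 0 * b.zeta 1 - a.zeta 1 * b.zeta 0 : ℤ) : ℚ) := rfl
@[simp] lemma one_zeta : (1 : GammaR r).zeta = 0 := rfl
@[simp] lemma one_y : (1 : GammaR r).y = 0 := rfl
@[simp] lemma inv_zeta (a : GammaR r) : a⁻¹.zeta = -a.zeta := rfl
@[simp] lemma inv_y (a : GammaR r) : a⁻¹.y = -a.y := rfl

instance : Group (GammaR r) where
  mul_assoc a b c := by
    ext
    · simp [add_assoc]
    · simp only [mul_y, mul_zeta, Pi.add_apply]
      push_cast
      ring
  one_mul a := by ext <;> simp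
  mul_one a := by ext <;> simp
  inv_mul_cancel a := by
    ext
    · simp
    · simp only [mul_y, inv_y, inv_zeta, Pi.neg_apply, one_y]
      push_cast
      ring

/-- The element `((l₁,l₂), l₃ + l₁l₂r/2)` of `Γ_r`. -/
def elt (r l1 l2 l3 : ℤ) : GammaR r :=
  ⟨![l1, l2], (l3 : ℚ) + (l1 : ℚ) * (l2 : ℚ) * (r : ℚ) / 2, by
    have h1 := intCast_mem_Zr r l3
    have h2 := half_mul_intCast_mem_Zr r (l1 * l2)
    have : (l3 : ℚ) + (r : ℚ) / 2 * ((l1 * l2 : ℤ) : ℚ) ∈ Zr r := add_mem h1 h2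
    convert this using 1
    push_cast
    ring⟩

end GammaR

section Aux

namespace GammaR

variable {r : ℤ}

@[simp] lemma elt_zeta (r a b c : ℤ) : (elt r a b c).zeta = ![a, b] := rfl

@[simp] lemma elt_y (r a b c : ℤ) :
    (elt r a b c).y = (c : ℚ) + (a : ℚ) * (b : ℚ) * (r : ℚ) / 2 := rfl

lemma pow_zeta (x : GammaR r) (n : ℕ) : (x ^ n).zeta = n • x.zeta := by
  induction n with
  | zero => simp
  | succ n ih => rw [pow_succ, mul_zeta, ih, succ_nsmul]

lemma pow_y (x : GammaR r) (n : ℕ) : (x ^ n).y = n * x.y := by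
  induction n with
  | zero => simp
  | succ n ih =>
    rw [pow_succ, mul_y, ih, pow_zeta]
    simp only [Pi.smul_apply, smul_eq_mul, nsmul_eq_mul]
    push_cast
    ring

lemma zpow_zeta (x : GammaR r) (l : ℤ) : (x ^ l).zeta = l • x.zeta := by
  cases l with
  | ofNat n => rw [Int.ofNat_eq_coe, zpow_natCast, pow_zeta]; norm_num
  | negSucc n =>
    rw [zpow_negSucc, inv_zeta, pow_zeta]
    ext i
    simp [Int.negSucc_eq]
    ring

lemma zpow_y (x : GammaR r) (l : ℤ) : (x ^ l).y = (l : ℚ) * x.y := by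
  cases l with
  | ofNat n => rw [Int.ofNat_eq_coe, zpow_natCast, pow_y]; norm_num
  | negSucc n =>
    rw [zpow_negSucc, inv_y, pow_y, Int.negSucc_eq]
    push_cast
    ring

lemma elt_mul (r a b c a' b' c' : ℤ) :
    elt r a b c * elt r a' b' c' = elt r (a + a') (b + b') (c + c' - r * a' * b) := by
  ext i
  · fin_cases i <;> simp [elt]
  · show (elt r a b c * elt r a' b' c').y = _
    rw [mul_y, elt_y, elt_y, elt_y, elt_zeta, elt_zeta]
    simp only [Matrix.cons_val_zero, Matrix.cons_val_one, Matrix.head_cons]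
    push_cast
    ring

lemma elt_inv (r a b c : ℤ) :
    (elt r a b c)⁻¹ = elt r (-a) (-b) (-c - r * a * b) := by
  ext i
  · fin_cases i <;> simp [elt]
  · show (elt r a b c)⁻¹.y = _
    rw [inv_y, elt_y, elt_y]
    push_cast
    ring

end GammaR

variable (N : Matrix (Fin 2) (Fin 2) ℤ) (p q r : ℤ)

lemma gplus_rel_one {w : FreeGroup (Fin 4)} (hw : w ∈ gplusRels N p q r) :
    PresentedGroup.mk (gplusRels N p q r) w = 1 :=
  (QuotientGroup.eq_one_iff _).mpr (Subgroup.subset_normalClosure hw)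

lemma gplus_relA :
    (PresentedGroup.of 0 : Gplus N p q r) * .of 1 * (.of 0)⁻¹ =
      (.of 1) ^ N 0 0 * (.of 2) ^ N 0 1 * (.of 3) ^ p := by
  have h := gplus_rel_one N p q r (w := FreeGroup.of 0 * FreeGroup.of 1 * (FreeGroup.of 0)⁻¹ *
      ((FreeGroup.of 1) ^ N 0 0 * (FreeGroup.of 2) ^ N 0 1 * (FreeGroup.of 3) ^ p)⁻¹)
    (by simp [gplusRels])
  simp only [map_mul, map_inv, map_zpow] at h
  exact mul_inv_eq_one.mp h

lemma gplus_relB :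
    (PresentedGroup.of 0 : Gplus N p q r) * .of 2 * (.of 0)⁻¹ =
      (.of 1) ^ N 1 0 * (.of 2) ^ N 1 1 * (.of 3) ^ q := by
  have h := gplus_rel_one N p q r (w := FreeGroup.of 0 * FreeGroup.of 2 * (FreeGroup.of 0)⁻¹ *
      ((FreeGroup.of 1) ^ N 1 0 * (FreeGroup.of 2) ^ N 1 1 * (FreeGroup.of 3) ^ q)⁻¹)
    (by simp [gplusRels])
  simp only [map_mul, map_inv, map_zpow] at h
  exact mul_inv_eq_one.mp h

lemma gplus_relC :
    (PresentedGroup.of 0 : Gplus N p q r) * .of 3 * (.of 0)⁻¹ = .of 3 := by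
  have h := gplus_rel_one N p q r (w := FreeGroup.of 3 * FreeGroup.of 0 * (FreeGroup.of 3)⁻¹ *
      (FreeGroup.of 0)⁻¹) (by simp [gplusRels])
  simp only [map_mul, map_inv] at h
  have h' : (PresentedGroup.of 3 : Gplus N p q r) * .of 0 * (.of 3)⁻¹ * (.of 0)⁻¹ = 1 := h
  have h1 : (PresentedGroup.of 3 : Gplus N p q r) * .of 0 * (.of 3)⁻¹ = .of 0 :=
    mul_inv_eq_one.mp h'
  have h2 : (PresentedGroup.of 3 : Gplus N p q r) * .of 0 = .of 0 * .of 3 := by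
    conv_rhs => rw [← h1]
    group
  rw [← h2]; group

lemma gplus_conj (a b c : ℤ) :
    (PresentedGroup.of 0 : Gplus N p q r) *
        ((PresentedGroup.of 1 : Gplus N p q r) ^ a * .of 2 ^ b * .of 3 ^ c) * (.of 0)⁻¹ =
      ((.of 1 : Gplus N p q r) ^ N 0 0 * .of 2 ^ N 0 1 * .of 3 ^ p) ^ a *
        ((.of 1 : Gplus N p q r) ^ N 1 0 * .of 2 ^ N 1 1 * .of 3 ^ q) ^ b *
        (.of 3 : Gplus N p q r) ^ c := by
  have key : ∀ x : Gplus N p q r, (MulAut.conj (PresentedGroup.of 0)) x =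
      PresentedGroup.of 0 * x * (PresentedGroup.of 0)⁻¹ := fun x => MulAut.conj_apply _ _
  rw [← key, map_mul, map_mul, map_zpow, map_zpow, map_zpow, key, key, key,
    gplus_relA, gplus_relB, gplus_relC]

end Aux

/-- Conjugation by `g₀` preserves the subgroup `⟨g₁,g₂,g₃⟩` of `G = G⁺_{N,p,q,r}`, and
under the embedding `μ : ⟨g₁,g₂,g₃⟩ → Γ_r`, `g₁^{l₁}g₂^{l₂}g₃^{l₃} ↦ ((l₁,l₂), l₃+l₁l₂r/2)`,
conjugation by `g₀` is given by `(ζ, y) ↦ (ζN, ζ𝐩 + y)` where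
`𝐩 = (p + (r/2)n₁₁n₁₂, q + (r/2)n₂₁n₂₂)ᵀ`. -/
theorem stmt_8 (N : Matrix (Fin 2) (Fin 2) ℤ) (hN : N.det = 1) (p q r : ℤ) (hr : r ≠ 0)
    (Λ : Subgroup (Gplus N p q r))
    (hΛ : Λ = Subgroup.closure {PresentedGroup.of 1, PresentedGroup.of 2, PresentedGroup.of 3})
    (μ : Λ →* GammaR r) (hμinj : Function.Injective μ)
    (hμ : ∀ (l1 l2 l3 : ℤ)
        (h : (PresentedGroup.of 1 : Gplus N p q r) ^ l1 * PresentedGroup.of 2 ^ l2 *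
              PresentedGroup.of 3 ^ l3 ∈ Λ),
      μ ⟨_, h⟩ = GammaR.elt r l1 l2 l3) :
    (∀ x ∈ Λ, (PresentedGroup.of 0 : Gplus N p q r) * x * (PresentedGroup.of 0)⁻¹ ∈ Λ) ∧
    ∀ (γ : Λ)
      (h : (PresentedGroup.of 0 : Gplus N p q r) * (γ : Gplus N p q r) * (PresentedGroup.of 0)⁻¹ ∈ Λ),
      (μ ⟨_, h⟩).zeta = Matrix.vecMul (μ γ).zeta N ∧
      (μ ⟨_, h⟩).y = ((μ γ).zeta 0 : ℚ) * ((p : ℚ) + (r : ℚ) / 2 * (N 0 0 : ℚ) * (N 0 1 : ℚ))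
        + ((μ γ).zeta 1 : ℚ) * ((q : ℚ) + (r : ℚ) / 2 * (N 1 0 : ℚ) * (N 1 1 : ℚ))
        + (μ γ).y := by
    classical
  set g1 : Gplus N p q r := PresentedGroup.of 1 with hg1
  set g2 : Gplus N p q r := PresentedGroup.of 2 with hg2
  set g3 : Gplus N p q r := PresentedGroup.of 3 with hg3
  have hmem : ∀ l1 l2 l3 : ℤ, g1 ^ l1 * g2 ^ l2 * g3 ^ l3 ∈ Λ := by
    intro l1 l2 l3
    rw [hΛ]
    exact mul_mem (mul_mem (zpow_mem (Subgroup.subset_closure (by simp)) _)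
      (zpow_mem (Subgroup.subset_closure (by simp)) _))
      (zpow_mem (Subgroup.subset_closure (by simp)) _)
  have hμ' : ∀ (l1 l2 l3 : ℤ) (x : Λ), (x : Gplus N p q r) = g1 ^ l1 * g2 ^ l2 * g3 ^ l3 →
      μ x = GammaR.elt r l1 l2 l3 := by
    intro l1 l2 l3 x hx
    have : x = ⟨_, hmem l1 l2 l3⟩ := Subtype.ext hx
    rw [this]
    exact hμ l1 l2 l3 _
  have hnf : ∀ x (hx : x ∈ Λ), ∃ l1 l2 l3 : ℤ, x = g1 ^ l1 * g2 ^ l2 * g3 ^ l3 := by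
    intro x hx
    have hx' : x ∈ Subgroup.closure {g1, g2, g3} := hΛ ▸ hx
    clear hx
    induction hx' using Subgroup.closure_induction with
    | mem z hz =>
      simp only [Set.mem_insert_iff, Set.mem_singleton_iff] at hz
      rcases hz with rfl | rfl | rfl
      · exact ⟨1, 0, 0, by simp⟩
      · exact ⟨0, 1, 0, by simp⟩
      · exact ⟨0, 0, 1, by simp⟩
    | one => exact ⟨0, 0, 0, by simp⟩
    | mul x y hx hy ihx ihy =>
      have hxΛ : x ∈ Λ := by rw [hΛ]; exact hx
      have hyΛ : y ∈ Λ := by rw [hΛ]; exact hy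
      obtain ⟨a, b, c, he⟩ := ihx
      obtain ⟨a', b', c', he'⟩ := ihy
      refine ⟨a + a', b + b', c + c' - r * a' * b, ?_⟩
      have e3 : μ ⟨x * y, mul_mem hxΛ hyΛ⟩ =
          GammaR.elt r (a + a') (b + b') (c + c' - r * a' * b) := by
        have : (⟨x * y, mul_mem hxΛ hyΛ⟩ : Λ) = ⟨x, hxΛ⟩ * ⟨y, hyΛ⟩ := rfl
        rw [this, map_mul, hμ' a b c _ he, hμ' a' b' c' _ he', GammaR.elt_mul]
      have := hμinj (e3.trans (hμ' _ _ _ ⟨_, hmem (a + a') (b + b') (c + c' - r * a' * b)⟩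
        rfl).symm)
      exact congrArg Subtype.val this
    | inv x hx ihx =>
      have hxΛ : x ∈ Λ := by rw [hΛ]; exact hx
      obtain ⟨a, b, c, he⟩ := ihx
      refine ⟨-a, -b, -c - r * a * b, ?_⟩
      have e3 : μ ⟨x⁻¹, inv_mem hxΛ⟩ = GammaR.elt r (-a) (-b) (-c - r * a * b) := by
        have : (⟨x⁻¹, inv_mem hxΛ⟩ : Λ) = (⟨x, hxΛ⟩ : Λ)⁻¹ := rfl
        rw [this, map_inv, hμ' a b c _ he, GammaR.elt_inv]
      have := hμinj (e3.trans (hμ' _ _ _ ⟨_, hmem (-a) (-b) (-c - r * a * b)⟩ rfl).symm)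
      exact congrArg Subtype.val this
  have hAΛ : g1 ^ N 0 0 * g2 ^ N 0 1 * g3 ^ p ∈ Λ := hmem (N 0 0) (N 0 1) p
  have hBΛ : g1 ^ N 1 0 * g2 ^ N 1 1 * g3 ^ q ∈ Λ := hmem (N 1 0) (N 1 1) q
  have h3Λ : g3 ∈ Λ := by simpa using hmem 0 0 1
  have part1 : ∀ x ∈ Λ,
      (PresentedGroup.of 0 : Gplus N p q r) * x * (PresentedGroup.of 0)⁻¹ ∈ Λ := by
    intro x hx
    obtain ⟨a, b, c, he⟩ := hnf x hx
    rw [he, gplus_conj]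
    exact mul_mem (mul_mem (zpow_mem hAΛ _) (zpow_mem hBΛ _)) (zpow_mem h3Λ _)
  refine ⟨part1, ?_⟩
  intro γ h
  obtain ⟨a, b, c, hγ⟩ := hnf γ γ.2
  have hμγ : μ γ = GammaR.elt r a b c := hμ' a b c γ hγ
  have hsub : (⟨_, h⟩ : Λ) =
      (⟨_, hAΛ⟩ : Λ) ^ a * (⟨_, hBΛ⟩ : Λ) ^ b * (⟨g3, h3Λ⟩ : Λ) ^ c := by
    apply Subtype.ext
    push_cast
    rw [hγ, gplus_conj]
  have hval : μ ⟨_, h⟩ = (GammaR.elt r (N 0 0) (N 0 1) p) ^ a *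
      (GammaR.elt r (N 1 0) (N 1 1) q) ^ b * (GammaR.elt r 0 0 1) ^ c := by
    rw [hsub, map_mul, map_mul, map_zpow, map_zpow, map_zpow,
      hμ' (N 0 0) (N 0 1) p _ rfl, hμ' (N 1 0) (N 1 1) q _ rfl,
      hμ' 0 0 1 ⟨g3, h3Λ⟩ (by simp)]
  have hdet : (N 0 0 : ℚ) * N 1 1 - N 0 1 * N 1 0 = 1 := by
    rw [Matrix.det_fin_two] at hN
    exact_mod_cast congrArg (Int.cast : ℤ → ℚ) hN
  constructor
  · rw [hval, hμγ]
    ext i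
    fin_cases i <;>
      simp [GammaR.mul_zeta, GammaR.zpow_zeta, Matrix.vecMul, dotProduct,
        Fin.sum_univ_two, mul_comm]
  · rw [hval, hμγ]
    simp only [GammaR.mul_y, GammaR.zpow_y, GammaR.mul_zeta, GammaR.zpow_zeta,
      GammaR.elt_y, GammaR.elt_zeta, Pi.add_apply, Pi.smul_apply, smul_eq_mul,
      Matrix.cons_val_zero, Matrix.cons_val_one, Matrix.head_cons]
    push_cast
    linear_combination ((r : ℚ) / 2 * a * b) * hdet
end
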